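/- If G is an HZ-graph with maximum degree Δ, then every vertex of G has at least two neighbors of degree Δ. -/

import Mathlib

open SimpleGraph

/-- A proper edge coloring of `G` with `k` colors. -/
def IsProperEdgeColoring {V : Type*} (G : SimpleGraph V) (k : ℕ) (C : Sym2 V → ℕ) : Prop :=
  (∀ e ∈ G.edgeSet, C e < k) ∧
    ∀ e₁ ∈ G.edgeSet, ∀ e₂ ∈ G.edgeSet, e₁ ≠ e₂ → (∃ v, v ∈ e₁ ∧ v ∈ e₂) → C e₁ ≠ C e₂

namespace HZ

open Finset Classical

set_option linter.unusedSectionVars false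

variable {V : Type*} [Fintype V] [DecidableEq V]

theorem proper_iff {J : SimpleGraph V} {k : ℕ} {C : Sym2 V → ℕ} :
    IsProperEdgeColoring J k C ↔
      (∀ e ∈ J.edgeSet, C e < k) ∧
        ∀ ⦃u v w : V⦄, J.Adj u v → J.Adj u w → v ≠ w → C s(u, v) ≠ C s(u, w) := by
  constructor
  · rintro ⟨h1, h2⟩
    refine ⟨h1, fun u v w huv huw hvw => ?_⟩
    refine h2 _ huv _ huw (fun h => hvw ?_) ⟨u, by simp, by simp⟩
    · rcases (Sym2.eq_iff.1 h) with ⟨-, h⟩ | ⟨h', h''⟩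
      · exact h
      · exact h''.trans h'
  · rintro ⟨h1, h2⟩
    refine ⟨h1, fun e₁ he₁ e₂ he₂ hne ⟨u, hu₁, hu₂⟩ => ?_⟩
    obtain ⟨v, rfl⟩ := Sym2.mem_iff_exists.1 hu₁
    obtain ⟨w, rfl⟩ := Sym2.mem_iff_exists.1 hu₂
    exact h2 he₁ he₂ (fun h => hne (by rw [h]))

/-- colors `< k` not appearing on any `J`-edge at `v`. -/
noncomputable def freeSet (J : SimpleGraph V) (k : ℕ) (C : Sym2 V → ℕ) (v : V) : Finset ℕ :=
  (Finset.range k).filter fun c => ∀ w : V, J.Adj v w → C s(v, w) ≠ c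

theorem mem_freeSet {J : SimpleGraph V} {k : ℕ} {C : Sym2 V → ℕ} {v : V} {c : ℕ} :
    c ∈ freeSet J k C v ↔ c < k ∧ ∀ w : V, J.Adj v w → C s(v, w) ≠ c := by
  simp [freeSet]



theorem fill_lemma {H : SimpleGraph V} {k : ℕ} {C : Sym2 V → ℕ} {y u : V}
    (hyu : H.Adj y u)
    (hC : IsProperEdgeColoring (H.deleteEdges {s(y, u)}) k C) {c : ℕ}
    (hcy : c ∈ freeSet (H.deleteEdges {s(y, u)}) k C y)
    (hcu : c ∈ freeSet (H.deleteEdges {s(y, u)}) k C u) :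
    IsProperEdgeColoring H k (Function.update C s(y, u) c) := by
  classical
  set f : Sym2 V := s(y, u) with hf
  rw [proper_iff] at hC ⊢
  obtain ⟨hlt, hpair⟩ := hC
  rw [mem_freeSet] at hcy hcu
  constructor
  · intro e he
    by_cases hef : e = f
    · rw [hef, Function.update_self]; exact hcy.1
    · rw [Function.update_of_ne hef]
      exact hlt e (by simp [SimpleGraph.edgeSet_deleteEdges, he, hef])
  · intro a v w hav haw hvw
    by_cases h1 : s(a, v) = f
    · have h2 : s(a, w) ≠ f := fun h => hvw (by
        have := h1.trans h.symm
        exact Sym2.congr_right.1 this)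
      rw [h1, Function.update_self, Function.update_of_ne h2]
      -- a ∈ {y, u}; edge s(a,w) is in H−f and touches a
      have haw' : (H.deleteEdges {f}).Adj a w := by
        simp only [SimpleGraph.deleteEdges_adj, Set.mem_singleton_iff]
        exact ⟨haw, h2⟩
      have ha : a = y ∨ a = u := by
        have : a ∈ f := by rw [← h1]; simp
        rw [hf] at this; rcases Sym2.mem_iff.1 this with h | h
        · exact Or.inl h
        · exact Or.inr h
      intro hcc
      rcases ha with rfl | rfl
      · exact hcy.2 w haw' hcc.symm
      · exact hcu.2 w haw' hcc.symm
    · by_cases h2 : s(a, w) = f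
      · rw [Function.update_of_ne h1, h2, Function.update_self]
        have hav' : (H.deleteEdges {f}).Adj a v := by
          simp only [SimpleGraph.deleteEdges_adj, Set.mem_singleton_iff]
          exact ⟨hav, h1⟩
        have ha : a = y ∨ a = u := by
          have : a ∈ f := by rw [← h2]; simp
          rw [hf] at this; rcases Sym2.mem_iff.1 this with h | h
          · exact Or.inl h
          · exact Or.inr h
        intro hcc
        rcases ha with rfl | rfl
        · exact hcy.2 v hav' hcc
        · exact hcu.2 v hav' hcc
      · rw [Function.update_of_ne h1, Function.update_of_ne h2]
        refine hpair ?_ ?_ hvw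
        · simp only [SimpleGraph.deleteEdges_adj, Set.mem_singleton_iff]; exact ⟨hav, h1⟩
        · simp only [SimpleGraph.deleteEdges_adj, Set.mem_singleton_iff]; exact ⟨haw, h2⟩

theorem shift_lemma {H : SimpleGraph V} {k : ℕ} {C : Sym2 V → ℕ} {y u w : V}
    (hyu : H.Adj y u) (hyw : H.Adj y w) (hne : s(y, w) ≠ s(y, u))
    (hC : IsProperEdgeColoring (H.deleteEdges {s(y, u)}) k C)
    (hcu : C s(y, w) ∈ freeSet (H.deleteEdges {s(y, u)}) k C u) :
    IsProperEdgeColoring (H.deleteEdges {s(y, w)}) k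
      (Function.update C s(y, u) (C s(y, w))) := by
  classical
  set f : Sym2 V := s(y, u) with hf
  set g : Sym2 V := s(y, w) with hg
  set c : ℕ := C g with hc
  have hgf : (H.deleteEdges {f}).Adj y w := by
    simp only [SimpleGraph.deleteEdges_adj, Set.mem_singleton_iff]; exact ⟨hyw, hne⟩
  rw [proper_iff] at hC ⊢
  obtain ⟨hlt, hpair⟩ := hC
  rw [mem_freeSet] at hcu
  have hclt : c < k := hlt g (by
    simp only [SimpleGraph.edgeSet_deleteEdges, Set.mem_diff, Set.mem_singleton_iff]
    exact ⟨hyw, hne⟩)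
  constructor
  · intro e he
    by_cases hef : e = f
    · rw [hef, Function.update_self]; exact hclt
    · rw [Function.update_of_ne hef]
      refine hlt e ?_
      simp only [SimpleGraph.edgeSet_deleteEdges, Set.mem_diff, Set.mem_singleton_iff] at he ⊢
      exact ⟨he.1, hef⟩
  · intro a v w' hav haw hvw
    -- edges s(a,v), s(a,w') are H-edges distinct from g
    have hav_ne_g : s(a, v) ≠ g := by
      simp only [SimpleGraph.deleteEdges_adj, Set.mem_singleton_iff] at hav; exact hav.2
    have haw_ne_g : s(a, w') ≠ g := by
      simp only [SimpleGraph.deleteEdges_adj, Set.mem_singleton_iff] at haw; exact haw.2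
    have havH : H.Adj a v := by
      simp only [SimpleGraph.deleteEdges_adj] at hav; exact hav.1
    have hawH : H.Adj a w' := by
      simp only [SimpleGraph.deleteEdges_adj] at haw; exact haw.1
    have key : ∀ b z : V, H.Adj b z → s(b, z) ≠ g → s(b, z) ≠ f →
        (b = y ∨ b = u) → C s(b, z) ≠ c := by
      intro b z hbz hbzg hbzf hb
      have hbz' : (H.deleteEdges {f}).Adj b z := by
        simp only [SimpleGraph.deleteEdges_adj, Set.mem_singleton_iff]; exact ⟨hbz, hbzf⟩
      rcases hb with rfl | rfl
      · -- at y : g is also at y, distinct edges in H−f, proper ⟹ different colors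
        have hzw : z ≠ w := fun h => hbzg (by rw [h])
        exact hpair hbz' hgf hzw
      · exact hcu.2 z hbz'
    by_cases h1 : s(a, v) = f
    · have h2 : s(a, w') ≠ f := fun h => hvw (Sym2.congr_right.1 (h1.trans h.symm))
      rw [h1, Function.update_self, Function.update_of_ne h2]
      have ha : a = y ∨ a = u := by
        have : a ∈ f := by rw [← h1]; simp
        rw [hf] at this; rcases Sym2.mem_iff.1 this with h | h
        · exact Or.inl h
        · exact Or.inr h
      exact fun hcc => key a w' hawH haw_ne_g h2 ha hcc.symm
    · by_cases h2 : s(a, w') = f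
      · rw [Function.update_of_ne h1, h2, Function.update_self]
        have ha : a = y ∨ a = u := by
          have : a ∈ f := by rw [← h2]; simp
          rw [hf] at this; rcases Sym2.mem_iff.1 this with h | h
          · exact Or.inl h
          · exact Or.inr h
        exact key a v havH hav_ne_g h1 ha
      · rw [Function.update_of_ne h1, Function.update_of_ne h2]
        refine hpair ?_ ?_ hvw
        · simp only [SimpleGraph.deleteEdges_adj, Set.mem_singleton_iff]; exact ⟨havH, h1⟩
        · simp only [SimpleGraph.deleteEdges_adj, Set.mem_singleton_iff]; exact ⟨hawH, h2⟩


/-! ### Kempe chains -/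

/-- The subgraph of `J` consisting of edges colored `a` or `b`. -/
def kg (J : SimpleGraph V) (C : Sym2 V → ℕ) (a b : ℕ) : SimpleGraph V where
  Adj u v := J.Adj u v ∧ (C s(u, v) = a ∨ C s(u, v) = b)
  symm := by
    constructor
    intro u v ⟨h1, h2⟩
    refine ⟨h1.symm, ?_⟩
    rwa [Sym2.eq_swap] at h2
  loopless := ⟨fun v h => J.loopless.irrefl v h.1⟩

/-- Swap colors `a`/`b` on the Kempe component of `u0`. -/
noncomputable def kswap (J : SimpleGraph V) (C : Sym2 V → ℕ) (a b : ℕ) (u0 : V) :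
    Sym2 V → ℕ := fun e =>
  if e ∈ (kg J C a b).edgeSet ∧ ∃ v ∈ e, (kg J C a b).Reachable u0 v then
    (if C e = a then b else a) else C e

variable {J : SimpleGraph V} {C : Sym2 V → ℕ} {a b : ℕ} {u0 : V}

theorem reach_step {u v : V} (h : (kg J C a b).Adj u v)
    (hr : (kg J C a b).Reachable u0 u) : (kg J C a b).Reachable u0 v :=
  hr.trans h.reachable

theorem kswap_eq_of_not_reach {u v : V}
    (hr : ¬ (kg J C a b).Reachable u0 u) :
    kswap J C a b u0 s(u, v) = C s(u, v) := by
  rw [kswap, if_neg]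
  rintro ⟨he, w, hw, hrw⟩
  rw [SimpleGraph.mem_edgeSet] at he
  rcases Sym2.mem_iff.1 hw with rfl | rfl
  · exact hr hrw
  · exact hr (reach_step he.symm hrw)

theorem kswap_eq_of_not_ab {e : Sym2 V} (h1 : C e ≠ a) (h2 : C e ≠ b) :
    kswap J C a b u0 e = C e := by
  rw [kswap, if_neg]
  rintro ⟨he, -⟩
  induction e with
  | _ u v =>
    rw [SimpleGraph.mem_edgeSet] at he
    rcases he.2 with h | h
    · exact h1 h
    · exact h2 h

theorem kswap_eq_swap {u v : V} (hj : J.Adj u v)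
    (hr : (kg J C a b).Reachable u0 u) (hab : C s(u, v) = a ∨ C s(u, v) = b) :
    kswap J C a b u0 s(u, v) = (if C s(u, v) = a then b else a) := by
  rw [kswap, if_pos]
  exact ⟨(SimpleGraph.mem_edgeSet _).2 ⟨hj, hab⟩, u, by simp, hr⟩

theorem kswap_proper {k : ℕ} (hC : IsProperEdgeColoring J k C)
    (hab : a ≠ b) (ha : a < k) (hb : b < k) :
    IsProperEdgeColoring J k (kswap J C a b u0) := by
  rw [proper_iff] at hC ⊢
  obtain ⟨hlt, hpair⟩ := hC
  constructor
  · intro e he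
    rw [kswap]
    split
    · split
      · exact hb
      · exact ha
    · exact hlt e he
  · intro u v w huv huw hvw
    have hne : C s(u, v) ≠ C s(u, w) := hpair huv huw hvw
    by_cases hru : (kg J C a b).Reachable u0 u
    · by_cases h1 : C s(u, v) = a ∨ C s(u, v) = b
      · by_cases h2 : C s(u, w) = a ∨ C s(u, w) = b
        · rw [kswap_eq_swap huv hru h1, kswap_eq_swap huw hru h2]
          rcases h1 with h1 | h1 <;> rcases h2 with h2 | h2
          · exact absurd (h1.trans h2.symm) hne
          · rw [if_pos h1, if_neg (by rw [h2]; exact fun h => hab h.symm)]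
            exact hab.symm
          · rw [if_neg (by rw [h1]; exact fun h => hab h.symm), if_pos h2]
            exact hab
          · exact absurd (h1.trans h2.symm) hne
        · push_neg at h2
          rw [kswap_eq_of_not_ab h2.1 h2.2]
          rw [kswap_eq_swap huv hru h1]
          rcases h1 with h1 | h1
          · rw [if_pos h1]; exact fun h => h2.2 h.symm
          · rw [if_neg (by rw [h1]; exact fun h => hab h.symm)]
            exact fun h => h2.1 h.symm
      · push_neg at h1
        rw [kswap_eq_of_not_ab h1.1 h1.2]
        by_cases h2 : C s(u, w) = a ∨ C s(u, w) = b
        · rw [kswap_eq_swap huw hru h2]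
          rcases h2 with h2 | h2
          · rw [if_pos h2]; exact h1.2
          · rw [if_neg (by rw [h2]; exact fun h => hab h.symm)]
            exact h1.1
        · push_neg at h2
          rw [kswap_eq_of_not_ab h2.1 h2.2]
          exact hne
    · rw [kswap_eq_of_not_reach hru, kswap_eq_of_not_reach hru]
      exact hne

theorem freeSet_kswap_of_not_reach {k : ℕ} {v : V}
    (hr : ¬ (kg J C a b).Reachable u0 v) {c : ℕ}
    (hc : c ∈ freeSet J k C v) : c ∈ freeSet J k (kswap J C a b u0) v := by
  rw [mem_freeSet] at hc ⊢
  refine ⟨hc.1, fun w hw => ?_⟩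
  rw [kswap_eq_of_not_reach hr]
  exact hc.2 w hw

theorem freeSet_kswap_of_not_ab {k : ℕ} {v : V} {c : ℕ} (h1 : c ≠ a) (h2 : c ≠ b)
    (hc : c ∈ freeSet J k C v) : c ∈ freeSet J k (kswap J C a b u0) v := by
  rw [mem_freeSet] at hc ⊢
  refine ⟨hc.1, fun w hw => ?_⟩
  rw [kswap]
  split
  · split
    · exact h2.symm
    · exact h1.symm
  · exact hc.2 w hw

theorem freeSet_kswap_reach {k : ℕ} {v : V} (ha : a < k)
    (hr : (kg J C a b).Reachable u0 v)
    (hb' : b ∈ freeSet J k C v) : a ∈ freeSet J k (kswap J C a b u0) v := by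
  rw [mem_freeSet] at hb' ⊢
  refine ⟨ha, fun w hw => ?_⟩
  by_cases hc : C s(v, w) = a ∨ C s(v, w) = b
  · rw [kswap_eq_swap hw hr hc]
    rcases hc with h | h
    · rw [if_pos h]
      exact fun hba => hb'.2 w hw (h.trans hba.symm)
    · exact (hb'.2 w hw h).elim
  · push_neg at hc
    rw [kswap_eq_of_not_ab hc.1 hc.2]
    exact hc.1

/-! ### Walk lemmas: a connected graph of max degree ≤ 2 has at most two "ends" -/

section Walks

variable {K : SimpleGraph V}

theorem edge_at_start {u v : V} (p : K.Walk u v) (hne : u ≠ v) :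
    ∃ e ∈ p.edges, u ∈ e := by
  cases p with
  | nil => exact absurd rfl hne
  | @cons u u₁ v h q => exact ⟨s(u, u₁), by simp, by simp⟩

theorem two_edges_at_internal {u v : V} (p : K.Walk u v) (hp : p.IsPath) {w : V}
    (hw : w ∈ p.support) (hwu : w ≠ u) (hwv : w ≠ v) :
    ∃ e₁ ∈ p.edges, ∃ e₂ ∈ p.edges, e₁ ≠ e₂ ∧ w ∈ e₁ ∧ w ∈ e₂ := by
  induction p with
  | nil => simp at hw; exact absurd hw hwu
  | @cons u u₁ v h q ih =>
    rw [SimpleGraph.Walk.support_cons, List.mem_cons] at hw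
    rcases hw with rfl | hw
    · exact absurd rfl hwu
    · by_cases hwu₁ : w = u₁
      · subst hwu₁
        obtain ⟨e₂, he₂, hwe₂⟩ := edge_at_start q hwv
        refine ⟨s(u, w), by simp, e₂, by simp [he₂], ?_, by simp, hwe₂⟩
        intro hcon
        rw [← hcon] at he₂
        have : u ∈ q.support := q.fst_mem_support_of_mem_edges he₂
        exact ((SimpleGraph.Walk.cons_isPath_iff _ _).1 hp).2 this
      · obtain ⟨e₁, he₁, e₂, he₂, hne, hw₁, hw₂⟩ :=
          ih ((SimpleGraph.Walk.cons_isPath_iff _ _).1 hp).1 hw hwu₁ hwv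
        exact ⟨e₁, by simp [he₁], e₂, by simp [he₂], hne, hw₁, hw₂⟩

theorem mem_support_of_reach_aux {u v : V} (p : K.Walk u v)
    (hcl : ∀ w ∈ p.support, ∀ z, K.Adj w z → s(w, z) ∈ p.edges) :
    ∀ {s t : V}, K.Reachable s t → s ∈ p.support → t ∈ p.support := by
  intro s t hst
  obtain ⟨q⟩ := hst
  induction q with
  | nil => exact id
  | cons h q ih =>
    intro hs
    exact ih (p.snd_mem_support_of_mem_edges (hcl _ hs _ h))

/-- In a graph where `u, v, t` can each carry at most one edge and every vertex at
most two, the three distinct vertices `u, v, t` cannot be mutually reachable. -/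
theorem three_low {u v t : V}
    (hdeg2 : ∀ (w : V) (e₁ e₂ e₃ : Sym2 V), e₁ ∈ K.edgeSet → e₂ ∈ K.edgeSet →
      e₃ ∈ K.edgeSet → e₁ ≠ e₂ → e₁ ≠ e₃ → e₂ ≠ e₃ → w ∈ e₁ → w ∈ e₂ → w ∈ e₃ → False)
    (hu : ∀ e₁ e₂ : Sym2 V, e₁ ∈ K.edgeSet → e₂ ∈ K.edgeSet → e₁ ≠ e₂ →
      u ∈ e₁ → u ∈ e₂ → False)
    (hv : ∀ e₁ e₂ : Sym2 V, e₁ ∈ K.edgeSet → e₂ ∈ K.edgeSet → e₁ ≠ e₂ →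
      v ∈ e₁ → v ∈ e₂ → False)
    (ht : ∀ e₁ e₂ : Sym2 V, e₁ ∈ K.edgeSet → e₂ ∈ K.edgeSet → e₁ ≠ e₂ →
      t ∈ e₁ → t ∈ e₂ → False)
    (huv : u ≠ v) (hut : u ≠ t) (hvt : v ≠ t)
    (r1 : K.Reachable u v) (r2 : K.Reachable u t) : False := by
  obtain ⟨q⟩ := r1
  set p := q.toPath.val with hpdef
  have hp : p.IsPath := q.toPath.property
  have hcl : ∀ w ∈ p.support, ∀ z, K.Adj w z → s(w, z) ∈ p.edges := by
    intro w hw z hwz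
    by_contra hcon
    have hK : s(w, z) ∈ K.edgeSet := hwz
    by_cases hwu : w = u
    · subst hwu
      obtain ⟨e, he, hwe⟩ := edge_at_start p huv
      exact hu _ _ hK (p.edges_subset_edgeSet he) (fun h => hcon (h ▸ he)) (by simp) hwe
    · by_cases hwv : w = v
      · subst hwv
        obtain ⟨e, he, hwe⟩ := edge_at_start p.reverse huv.symm
        rw [SimpleGraph.Walk.edges_reverse, List.mem_reverse] at he
        exact hv _ _ hK (p.edges_subset_edgeSet he) (fun h => hcon (h ▸ he)) (by simp) hwe
      · obtain ⟨e₁, he₁, e₂, he₂, hne, hw₁, hw₂⟩ := two_edges_at_internal p hp hw hwu hwv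
        exact hdeg2 w _ _ _ hK (p.edges_subset_edgeSet he₁) (p.edges_subset_edgeSet he₂)
          (fun h => hcon (h ▸ he₁)) (fun h => hcon (h ▸ he₂)) hne (by simp) hw₁ hw₂
  have hts : t ∈ p.support := mem_support_of_reach_aux p hcl r2 p.start_mem_support
  obtain ⟨e₁, he₁, e₂, he₂, hne, hw₁, hw₂⟩ := two_edges_at_internal p hp hts hut.symm hvt.symm
  exact ht _ _ (p.edges_subset_edgeSet he₁) (p.edges_subset_edgeSet he₂) hne hw₁ hw₂

end Walks

/-! ### degree bounds in the Kempe graph -/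

section KgDeg

variable {J : SimpleGraph V} {k : ℕ} {C : Sym2 V → ℕ} {a b : ℕ}

theorem kg_comm : kg J C a b = kg J C b a := by
  ext u v
  simp only [kg]
  tauto

theorem kg_pair (hC : IsProperEdgeColoring J k C) {w x₁ x₂ : V}
    (h₁ : (kg J C a b).Adj w x₁) (h₂ : (kg J C a b).Adj w x₂) (hx : x₁ ≠ x₂) :
    C s(w, x₁) ≠ C s(w, x₂) :=
  (proper_iff.1 hC).2 h₁.1 h₂.1 hx

theorem edge_at' {w : V} {e : Sym2 V} (he : e ∈ (kg J C a b).edgeSet) (hw : w ∈ e) :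
    ∃ x, e = s(w, x) ∧ (kg J C a b).Adj w x := by
  obtain ⟨x, rfl⟩ := Sym2.mem_iff_exists.1 hw
  exact ⟨x, rfl, he⟩

theorem other_ne {w x₁ x₂ : V} (h : s(w, x₁) ≠ s(w, x₂)) : x₁ ≠ x₂ :=
  fun hx => h (by rw [hx])

/-- a vertex missing color `b` has at most one edge in the `a/b` Kempe graph. -/
theorem kg_two (hC : IsProperEdgeColoring J k C) {w : V}
    (hb : b ∈ freeSet J k C w) :
    ∀ e₁ e₂ : Sym2 V, e₁ ∈ (kg J C a b).edgeSet → e₂ ∈ (kg J C a b).edgeSet →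
      e₁ ≠ e₂ → w ∈ e₁ → w ∈ e₂ → False := by
  intro e₁ e₂ he₁ he₂ hne hw₁ hw₂
  obtain ⟨x₁, rfl, hadj₁⟩ := edge_at' he₁ hw₁
  obtain ⟨x₂, rfl, hadj₂⟩ := edge_at' he₂ hw₂
  have hx : x₁ ≠ x₂ := other_ne hne
  have hc₁ : C s(w, x₁) = a := by
    rcases hadj₁.2 with h | h
    · exact h
    · exact absurd h ((mem_freeSet.1 hb).2 x₁ hadj₁.1)
  have hc₂ : C s(w, x₂) = a := by
    rcases hadj₂.2 with h | h
    · exact h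
    · exact absurd h ((mem_freeSet.1 hb).2 x₂ hadj₂.1)
  exact kg_pair hC hadj₁ hadj₂ hx (hc₁.trans hc₂.symm)

/-- every vertex has at most two edges in the Kempe graph. -/
theorem kg_three (hC : IsProperEdgeColoring J k C) (hab : a ≠ b) :
    ∀ (w : V) (e₁ e₂ e₃ : Sym2 V), e₁ ∈ (kg J C a b).edgeSet →
      e₂ ∈ (kg J C a b).edgeSet → e₃ ∈ (kg J C a b).edgeSet →
      e₁ ≠ e₂ → e₁ ≠ e₃ → e₂ ≠ e₃ → w ∈ e₁ → w ∈ e₂ → w ∈ e₃ → False := by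
  intro w e₁ e₂ e₃ he₁ he₂ he₃ h12 h13 h23 hw₁ hw₂ hw₃
  obtain ⟨x₁, rfl, hadj₁⟩ := edge_at' he₁ hw₁
  obtain ⟨x₂, rfl, hadj₂⟩ := edge_at' he₂ hw₂
  obtain ⟨x₃, rfl, hadj₃⟩ := edge_at' he₃ hw₃
  have heq : C s(w, x₁) = C s(w, x₂) ∨ C s(w, x₁) = C s(w, x₃) ∨
      C s(w, x₂) = C s(w, x₃) := by
    rcases hadj₁.2 with h1 | h1 <;> rcases hadj₂.2 with h2 | h2 <;>
      rcases hadj₃.2 with h3 | h3 <;> omega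
  rcases heq with h | h | h
  · exact kg_pair hC hadj₁ hadj₂ (other_ne h12) h
  · exact kg_pair hC hadj₁ hadj₃ (other_ne h13) h
  · exact kg_pair hC hadj₂ hadj₃ (other_ne h23) h

/-- Key Kempe-chain consequence: if `zi, zj` miss `b`, `y` misses `a`, all distinct,
then `y` and `zj` cannot both lie in the `a/b`-component of `zi`. -/
theorem kempe_no_three (hC : IsProperEdgeColoring J k C) (hab : a ≠ b) {y zi zj : V}
    (hzi : b ∈ freeSet J k C zi) (hzj : b ∈ freeSet J k C zj)
    (hy : a ∈ freeSet J k C y)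
    (hne1 : zi ≠ zj) (hne2 : zi ≠ y) (hne3 : zj ≠ y)
    (r1 : (kg J C a b).Reachable zi y) (r2 : (kg J C a b).Reachable zi zj) : False := by
  have hy' : ∀ e₁ e₂ : Sym2 V, e₁ ∈ (kg J C a b).edgeSet → e₂ ∈ (kg J C a b).edgeSet →
      e₁ ≠ e₂ → y ∈ e₁ → y ∈ e₂ → False := by
    rw [kg_comm]
    exact kg_two hC hy
  exact three_low (kg_three hC hab) (kg_two hC hzi) hy' (kg_two hC hzj)
    hne2 hne1 hne3.symm r1 r2

end KgDeg

/-! ### Vizing fans -/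

/-- A multifan at `y` based at the uncolored edge `xy`, w.r.t. a coloring `C` of `H - xy`.
The list grows at the head; the base `x` is the last element. -/
inductive IsFan (H : SimpleGraph V) (k : ℕ) (x y : V) (C : Sym2 V → ℕ) : List V → Prop
  | base : IsFan H k x y C [x]
  | cons (z : V) (L : List V) (hL : IsFan H k x y C L) (hz : z ∉ L)
      (hadj : (H.deleteEdges {s(x, y)}).Adj y z)
      (hw : ∃ z' ∈ L, C s(y, z) ∈ freeSet (H.deleteEdges {s(x, y)}) k C z') :
      IsFan H k x y C (z :: L)

section Fan

variable {H : SimpleGraph V} {k : ℕ} {x y : V} {C : Sym2 V → ℕ}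

theorem IsFan.base_mem {L : List V} (hL : IsFan H k x y C L) : x ∈ L := by
  induction hL with
  | base => simp
  | cons z L hL hz hadj hw ih => exact List.mem_cons_of_mem _ ih

theorem IsFan.nodup {L : List V} (hL : IsFan H k x y C L) : L.Nodup := by
  induction hL with
  | base => simp
  | cons z L hL hz hadj hw ih => exact List.nodup_cons.2 ⟨hz, ih⟩

theorem IsFan.mem_adj (hxy : H.Adj x y) {L : List V} (hL : IsFan H k x y C L) {z : V}
    (hz : z ∈ L) : z = x ∨ (H.deleteEdges {s(x, y)}).Adj y z := by
  induction hL with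
  | base => simp at hz; exact Or.inl hz
  | cons z' L hL hz' hadj hw ih =>
    rcases List.mem_cons.1 hz with rfl | hz
    · exact Or.inr hadj
    · exact ih hz

theorem IsFan.mem_adj' (hxy : H.Adj x y) {L : List V} (hL : IsFan H k x y C L) {z : V}
    (hz : z ∈ L) : H.Adj y z := by
  rcases hL.mem_adj hxy hz with rfl | h
  · exact hxy.symm
  · exact h.1

theorem IsFan.mem_ne_y (hxy : H.Adj x y) {L : List V} (hL : IsFan H k x y C L) {z : V}
    (hz : z ∈ L) : z ≠ y :=
  fun h => H.loopless.irrefl y (h ▸ (hL.mem_adj' hxy hz)).symm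

theorem IsFan.suffix_of_mem {L : List V} (hL : IsFan H k x y C L) {z : V} (hz : z ∈ L) :
    ∃ M, (z :: M) <:+ L ∧ IsFan H k x y C (z :: M) := by
  induction hL with
  | base =>
    simp only [List.mem_singleton] at hz
    subst hz
    exact ⟨[], List.suffix_refl _, IsFan.base⟩
  | cons z' L hL hz' hadj hw ih =>
    rcases List.mem_cons.1 hz with rfl | hz
    · exact ⟨L, List.suffix_refl _, IsFan.cons _ L hL hz' hadj hw⟩
    · obtain ⟨M, hsuf, hfan⟩ := ih hz
      exact ⟨M, hsuf.trans (List.suffix_cons _ _), hfan⟩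

/-- The rotation lemma: the hole can be moved to any fan vertex. -/
theorem fan_rotate (hxy : H.Adj x y)
    (hC : IsProperEdgeColoring (H.deleteEdges {s(x, y)}) k C) :
    ∀ (n : ℕ) (L : List V), L.length ≤ n → IsFan H k x y C L → ∀ z ∈ L,
      ∃ C' : Sym2 V → ℕ,
        IsProperEdgeColoring (H.deleteEdges {s(y, z)}) k C' ∧
        (∀ e : Sym2 V, (∀ w ∈ L, e ≠ s(y, w)) → C' e = C e) ∧
        (∀ c, c ∈ freeSet (H.deleteEdges {s(x, y)}) k C y →
          c ∈ freeSet (H.deleteEdges {s(y, z)}) k C' y) := by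
  intro n
  induction n with
  | zero =>
    intro L hlen hL z hz
    rw [Nat.le_zero, List.length_eq_zero_iff] at hlen
    subst hlen; simp at hz
  | succ n ih =>
    intro L hlen hL z hz
    obtain ⟨M, hsuf, hfan⟩ := hL.suffix_of_mem hz
    cases hfan with
    | base =>
      refine ⟨C, ?_, fun e _ => rfl, ?_⟩
      · rwa [Sym2.eq_swap]
      · rw [Sym2.eq_swap]; exact fun c h => h
    | cons z M hM hzM hadj hw =>
      obtain ⟨z', hz'M, hcfree⟩ := hw
      -- apply the inductive hypothesis on M for z'
      have hMlen : M.length ≤ n := by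
        have h1 : (z :: M).length ≤ L.length := hsuf.length_le
        simp only [List.length_cons] at h1
        omega
      obtain ⟨C₁, hC₁, hagree₁, hfree₁⟩ := ih M hMlen hM z' hz'M
      have hz'x : H.Adj y z' := hM.mem_adj' hxy hz'M
      have hz'y : z' ≠ y := hM.mem_ne_y hxy hz'M
      have hzy : z ≠ y := fun h => ((h ▸ hadj : (H.deleteEdges {s(x, y)}).Adj y y)).ne rfl
      have hzz' : z ≠ z' := fun h => hzM (h ▸ hz'M)
      -- C₁ agrees with C on s(y,z)
      have hCz : C₁ s(y, z) = C s(y, z) := by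
        refine hagree₁ _ (fun w hwM h => ?_)
        have : z = w := Sym2.congr_right.1 h
        exact hzM (this ▸ hwM)
      -- the color c := C s(y,z) is free at z' for C₁ in H - s(y,z')
      have hcfree₁ : C₁ s(y, z) ∈ freeSet (H.deleteEdges {s(y, z')}) k C₁ z' := by
        rw [hCz, mem_freeSet]
        rw [mem_freeSet] at hcfree
        refine ⟨hcfree.1, fun w hw => ?_⟩
        simp only [SimpleGraph.deleteEdges_adj, Set.mem_singleton_iff] at hw
        have hwy : w ≠ y := by
          intro h
          exact hw.2 (by rw [h, Sym2.eq_swap])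
        have heq : C₁ s(z', w) = C s(z', w) := by
          refine hagree₁ _ (fun w' hw'M h => ?_)
          have : y ∈ s(z', w) := by rw [h]; simp
          rcases Sym2.mem_iff.1 this with h' | h'
          · exact hz'y h'.symm
          · exact hwy h'.symm
        rw [heq]
        refine hcfree.2 w ?_
        simp only [SimpleGraph.deleteEdges_adj, Set.mem_singleton_iff]
        refine ⟨hw.1, fun h => ?_⟩
        have : y ∈ s(z', w) := by rw [h]; simp
        rcases Sym2.mem_iff.1 this with h' | h'
        · exact hz'y h'.symm
        · exact hwy h'.symm
      -- shift the hole from s(y,z') to s(y,z)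
      have hnee : s(y, z) ≠ s(y, z') := fun h => hzz' (Sym2.congr_right.1 h)
      have hshift := shift_lemma hz'x hadj.1 hnee hC₁ hcfree₁
      refine ⟨Function.update C₁ s(y, z') (C₁ s(y, z)), hshift, ?_, ?_⟩
      · intro e he
        have he' : e ≠ s(y, z') := he z' (List.IsSuffix.mem
          (List.mem_cons_of_mem _ hz'M) hsuf)
        rw [Function.update_of_ne he']
        refine hagree₁ _ (fun w hwM h => ?_)
        exact he w (List.IsSuffix.mem (List.mem_cons_of_mem _ hwM) hsuf) h
      · intro c hc
        have hc₁ := hfree₁ c hc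
        rw [mem_freeSet] at hc₁ ⊢
        refine ⟨hc₁.1, fun w hw => ?_⟩
        simp only [SimpleGraph.deleteEdges_adj, Set.mem_singleton_iff] at hw
        have hwz : w ≠ z := fun h => hw.2 (by rw [h])
        by_cases hwz' : w = z'
        · subst hwz'
          rw [Function.update_self]
          refine hc₁.2 z ?_
          simp only [SimpleGraph.deleteEdges_adj, Set.mem_singleton_iff]
          exact ⟨hadj.1, hnee⟩
        · rw [Function.update_of_ne (fun h => hwz' (Sym2.congr_right.1 h))]
          refine hc₁.2 w ?_
          simp only [SimpleGraph.deleteEdges_adj, Set.mem_singleton_iff]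
          exact ⟨hw.1, fun h => hwz' (Sym2.congr_right.1 h)⟩

/-- L1 : no color is free at both `y` and a fan vertex. -/
theorem fan_L1 (hnc : ¬∃ C', IsProperEdgeColoring H k C') (hxy : H.Adj x y)
    (hC : IsProperEdgeColoring (H.deleteEdges {s(x, y)}) k C)
    {L : List V} (hL : IsFan H k x y C L) {z : V} (hz : z ∈ L) {γ : ℕ}
    (h1 : γ ∈ freeSet (H.deleteEdges {s(x, y)}) k C z)
    (h2 : γ ∈ freeSet (H.deleteEdges {s(x, y)}) k C y) : False := by
  obtain ⟨C', hC', hagree, hfree⟩ :=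
    fan_rotate hxy hC L.length L le_rfl hL z hz
  have hzy : z ≠ y := hL.mem_ne_y hxy hz
  have hyz : H.Adj y z := hL.mem_adj' hxy hz
  have hγy : γ ∈ freeSet (H.deleteEdges {s(y, z)}) k C' y := hfree γ h2
  have hγz : γ ∈ freeSet (H.deleteEdges {s(y, z)}) k C' z := by
    rw [mem_freeSet] at h1 ⊢
    refine ⟨h1.1, fun w hw => ?_⟩
    simp only [SimpleGraph.deleteEdges_adj, Set.mem_singleton_iff] at hw
    have hwy : w ≠ y := by
      intro h
      exact hw.2 (by rw [h, Sym2.eq_swap])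
    have heq : C' s(z, w) = C s(z, w) := by
      refine hagree _ (fun w' hw'L h => ?_)
      have : y ∈ s(z, w) := by rw [h]; simp
      rcases Sym2.mem_iff.1 this with h' | h'
      · exact hzy h'.symm
      · exact hwy h'.symm
    rw [heq]
    refine h1.2 w ?_
    simp only [SimpleGraph.deleteEdges_adj, Set.mem_singleton_iff]
    refine ⟨hw.1, fun h => ?_⟩
    have : y ∈ s(z, w) := by rw [h]; simp
    rcases Sym2.mem_iff.1 this with h' | h'
    · exact hzy h'.symm
    · exact hwy h'.symm
  exact hnc ⟨_, fill_lemma hyz hC' hγy hγz⟩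

end Fan

section Fan2

variable {H : SimpleGraph V} {k : ℕ} {x y : V} {C : Sym2 V → ℕ}

theorem suffix_eq_of_head_eq {A B L : List V} {t : V} (hL : L.Nodup)
    (h1 : (t :: A) <:+ L) (h2 : (t :: B) <:+ L) : A = B := by
  rcases List.suffix_or_suffix_of_suffix h1 h2 with h | h
  · rcases List.suffix_cons_iff.1 h with h | h
    · exact (List.cons.injEq .. ▸ h).2
    · exact absurd (h.mem (by simp))
        (List.nodup_cons.1 (h2.sublist.nodup hL)).1
  · rcases List.suffix_cons_iff.1 h with h | h
    · exact ((List.cons.injEq .. ▸ h).2).symm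
    · exact absurd (h.mem (by simp))
        (List.nodup_cons.1 (h1.sublist.nodup hL)).1

theorem exists_maximal_fan (hxy : H.Adj x y) (C : Sym2 V → ℕ) :
    ∃ L : List V, IsFan H k x y C L ∧ ∀ z : V, ¬ IsFan H k x y C (z :: L) := by
  classical
  suffices h : ∀ (m : ℕ) (L : List V), IsFan H k x y C L →
      Fintype.card V ≤ L.length + m →
      ∃ L' : List V, IsFan H k x y C L' ∧ ∀ z : V, ¬ IsFan H k x y C (z :: L') by
    exact h (Fintype.card V) [x] IsFan.base (by simp)
  intro m
  induction m with
  | zero =>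
    intro L hL hlen
    refine ⟨L, hL, fun z hz => ?_⟩
    have h1 : (z :: L).length ≤ Fintype.card V := List.Nodup.length_le_card hz.nodup
    simp only [List.length_cons] at h1
    omega
  | succ m ih =>
    intro L hL hlen
    by_cases hext : ∃ z : V, IsFan H k x y C (z :: L)
    · obtain ⟨z, hz⟩ := hext
      exact ih (z :: L) hz (by simp; omega)
    · exact ⟨L, hL, fun z hz => hext ⟨z, hz⟩⟩

theorem fan_closure (hnc : ¬∃ C', IsProperEdgeColoring H k C') (hxy : H.Adj x y)
    (hC : IsProperEdgeColoring (H.deleteEdges {s(x, y)}) k C)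
    {L : List V} (hL : IsFan H k x y C L)
    (hmax : ∀ z : V, ¬ IsFan H k x y C (z :: L)) {z' : V} (hz' : z' ∈ L) {β : ℕ}
    (hβ : β ∈ freeSet (H.deleteEdges {s(x, y)}) k C z') :
    ∃ w ∈ L, (H.deleteEdges {s(x, y)}).Adj y w ∧ C s(y, w) = β := by
  have hβy : β ∉ freeSet (H.deleteEdges {s(x, y)}) k C y :=
    fun h => fan_L1 hnc hxy hC hL hz' hβ h
  rw [mem_freeSet] at hβy
  push_neg at hβy
  obtain ⟨w, hw, hcw⟩ := hβy (mem_freeSet.1 hβ).1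
  refine ⟨w, ?_, hw, hcw⟩
  by_contra hwL
  exact hmax w (IsFan.cons w L hL hwL hw ⟨z', hz', hcw ▸ hβ⟩)

/-- Stability of fans under Kempe swaps. -/
theorem fan_swap (hxy : H.Adj x y)
    (hC : IsProperEdgeColoring (H.deleteEdges {s(x, y)}) k C)
    {α β : ℕ} (hα : α ∈ freeSet (H.deleteEdges {s(x, y)}) k C y) {u0 : V}
    (hyR : ¬ (kg (H.deleteEdges {s(x, y)}) C α β).Reachable u0 y) :
    ∀ N : List V, IsFan H k x y C N →
      (∀ (w : V) (N' : List V), (w :: N') <:+ N → (H.deleteEdges {s(x, y)}).Adj y w →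
        C s(y, w) = β → ∀ v ∈ N', β ∈ freeSet (H.deleteEdges {s(x, y)}) k C v →
          ¬ (kg (H.deleteEdges {s(x, y)}) C α β).Reachable u0 v) →
      IsFan H k x y (kswap (H.deleteEdges {s(x, y)}) C α β u0) N := by
  intro N hN
  induction hN with
  | base => intro _; exact IsFan.base
  | cons z N hNfan hz hadj hw ih =>
    intro hcond
    obtain ⟨v, hvN, hvfree⟩ := hw
    refine IsFan.cons z N (ih (fun w N' hsuf => hcond w N'
      (hsuf.trans (List.suffix_cons _ _)))) hz hadj ⟨v, hvN, ?_⟩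
    have hedge : kswap (H.deleteEdges {s(x, y)}) C α β u0 s(y, z) = C s(y, z) :=
      kswap_eq_of_not_reach hyR
    rw [hedge]
    by_cases hcα : C s(y, z) = α
    · exact absurd hcα ((mem_freeSet.1 hα).2 z hadj)
    · by_cases hcβ : C s(y, z) = β
      · have hvfree' : β ∈ freeSet (H.deleteEdges {s(x, y)}) k C v := hcβ ▸ hvfree
        have hvR := hcond z N (List.suffix_refl _) hadj hcβ v hvN hvfree'
        rw [hcβ]
        exact freeSet_kswap_of_not_reach hvR hvfree'
      · exact freeSet_kswap_of_not_ab hcα hcβ hvfree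

/-- Claim 1: for a maximal fan, any color free at a fan vertex chains it to `y`. -/
theorem fan_claim1 (hnc : ¬∃ C', IsProperEdgeColoring H k C') (hxy : H.Adj x y)
    (hC : IsProperEdgeColoring (H.deleteEdges {s(x, y)}) k C)
    {L : List V} (hL : IsFan H k x y C L)
    (hmax : ∀ z : V, ¬ IsFan H k x y C (z :: L)) {α : ℕ}
    (hα : α ∈ freeSet (H.deleteEdges {s(x, y)}) k C y) :
    ∀ (n : ℕ) (z : V) (M : List V), (z :: M).length ≤ n → (z :: M) <:+ L →
      IsFan H k x y C (z :: M) →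
      ∀ β ∈ freeSet (H.deleteEdges {s(x, y)}) k C z,
        (kg (H.deleteEdges {s(x, y)}) C α β).Reachable z y := by
  set J := H.deleteEdges {s(x, y)} with hJ
  intro n
  induction n with
  | zero => intro z M hlen; simp at hlen
  | succ n ih =>
    intro z M hlen hsuf hfan β hβ
    by_contra hreach
    have hzL : z ∈ L := hsuf.mem (by simp)
    have hαβ : α ≠ β := fun h => fan_L1 hnc hxy hC hL hzL (h ▸ hβ) hα
    have hαk : α < k := (mem_freeSet.1 hα).1
    have hβk : β < k := (mem_freeSet.1 hβ).1
    -- the β-edge at y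
    obtain ⟨t, htL, htadj, htc⟩ := fan_closure hnc hxy hC hL hmax hzL hβ
    -- uniqueness of the β-edge at y
    have huniq : ∀ w : V, J.Adj y w → C s(y, w) = β → w = t := by
      intro w hw hcw
      by_contra hne
      exact (proper_iff.1 hC).2 hw htadj hne (hcw.trans htc.symm)
    have htz : t ≠ z := by
      intro h
      subst h
      exact (mem_freeSet.1 hβ).2 y htadj.symm (Sym2.eq_swap ▸ htc)
    obtain ⟨Mt, htsuf, htfan⟩ := hL.suffix_of_mem htL
    have htMt : t ∉ Mt := (List.nodup_cons.1 htfan.nodup).1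
    -- swapped coloring
    set C' := kswap J C α β z with hC'
    have hC'p : IsProperEdgeColoring J k C' := kswap_proper hC hαβ hαk hβk
    have hαz : α ∈ freeSet J k C' z :=
      freeSet_kswap_reach hαk (SimpleGraph.Reachable.refl z) hβ
    have hαy : α ∈ freeSet J k C' y := freeSet_kswap_of_not_reach hreach hα
    rcases List.suffix_or_suffix_of_suffix hsuf htsuf with hAB | hAB
    · -- Case A : z is strictly below t; swap and use the fan Mt
      have hzMt : (z :: M) <:+ Mt := by
        rcases List.suffix_cons_iff.1 hAB with h | h
        · exact absurd ((List.cons.injEq .. ▸ h).1) htz.symm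
        · exact h
      -- Mt is a fan
      have hMtfan : IsFan H k x y C Mt := by
        cases htfan with
        | base =>
          exfalso
          have h2 := htadj
          rw [SimpleGraph.deleteEdges_adj] at h2
          exact h2.2 (by rw [Sym2.eq_swap]; exact rfl)
        | cons _ _ hMfan _ _ _ => exact hMfan
      have hMtfan' : IsFan H k x y C' Mt := by
        refine fan_swap hxy hC hα hreach Mt hMtfan ?_
        intro w N' hsufw hwadj hwc v hvN' hvfree
        exfalso
        have hwt : w = t := huniq w hwadj hwc
        exact htMt (hwt ▸ (hsufw.mem (by simp : w ∈ w :: N')))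
      exact fan_L1 hnc hxy hC'p hMtfan' (hzMt.mem (by simp)) hαz hαy
    · -- Case B : t is at or below z's position; swap the whole fan L
      have htM : (t :: Mt) <:+ M := by
        rcases List.suffix_cons_iff.1 hAB with h | h
        · exact absurd ((List.cons.injEq .. ▸ h).1) htz
        · exact h
      have hLfan' : IsFan H k x y C' L := by
        refine fan_swap hxy hC hα hreach L hL ?_
        intro w N' hsufw hwadj hwc v hvN' hvfree
        have hwt : w = t := huniq w hwadj hwc
        have hsufw' : (t :: N') <:+ L := hwt ▸ hsufw
        have hN'Mt : N' = Mt := suffix_eq_of_head_eq hL.nodup hsufw' htsuf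
        have hvMt : v ∈ Mt := hN'Mt ▸ hvN'
        -- v is strictly below t, hence has a short suffix; apply the IH
        have hvL : v ∈ L := htsuf.mem (List.mem_cons_of_mem _ hvMt)
        obtain ⟨Mv, hvsuf, hvfan⟩ := hL.suffix_of_mem hvL
        have hMtL : Mt <:+ L := (List.suffix_cons t Mt).trans htsuf
        have hvshort : (v :: Mv).length ≤ Mt.length := by
          rcases List.suffix_or_suffix_of_suffix hvsuf hMtL with h | h
          · exact h.length_le
          · rcases List.suffix_cons_iff.1 h with h | h
            · rw [h]
            · exact absurd (h.mem hvMt)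
                (List.nodup_cons.1 (hvsuf.sublist.nodup hL.nodup)).1
        have hvlen : (v :: Mv).length ≤ n := by
          have h2 : (t :: Mt).length ≤ M.length := htM.length_le
          simp only [List.length_cons] at hlen h2 hvshort ⊢
          omega
        have hvy := ih v Mv hvlen hvsuf hvfan β hvfree
        exact fun hzv => hreach (hzv.trans hvy)
      exact fan_L1 hnc hxy hC'p hLfan' hzL hαz hαy

end Fan2

section Fan3

variable {H : SimpleGraph V} {k : ℕ} {x y : V} {C : Sym2 V → ℕ}

/-- L2 : free sets of distinct fan vertices are disjoint. -/
theorem fan_L2 (hnc : ¬∃ C', IsProperEdgeColoring H k C') (hxy : H.Adj x y)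
    (hC : IsProperEdgeColoring (H.deleteEdges {s(x, y)}) k C)
    {L : List V} (hL : IsFan H k x y C L)
    (hmax : ∀ z : V, ¬ IsFan H k x y C (z :: L)) {α : ℕ}
    (hα : α ∈ freeSet (H.deleteEdges {s(x, y)}) k C y) {z₁ z₂ : V}
    (hz₁ : z₁ ∈ L) (hz₂ : z₂ ∈ L) (hne : z₁ ≠ z₂) {β : ℕ}
    (hβ₁ : β ∈ freeSet (H.deleteEdges {s(x, y)}) k C z₁)
    (hβ₂ : β ∈ freeSet (H.deleteEdges {s(x, y)}) k C z₂) : False := by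
  have hαβ : α ≠ β := fun h => fan_L1 hnc hxy hC hL hz₁ (h ▸ hβ₁) hα
  obtain ⟨M₁, hsuf₁, hfan₁⟩ := hL.suffix_of_mem hz₁
  obtain ⟨M₂, hsuf₂, hfan₂⟩ := hL.suffix_of_mem hz₂
  have r1 := fan_claim1 hnc hxy hC hL hmax hα L.length z₁ M₁ hsuf₁.length_le hsuf₁
    hfan₁ β hβ₁
  have r2' := fan_claim1 hnc hxy hC hL hmax hα L.length z₂ M₂ hsuf₂.length_le hsuf₂
    hfan₂ β hβ₂
  exact kempe_no_three hC hαβ hβ₁ hβ₂ hα hne (hL.mem_ne_y hxy hz₁)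
    (hL.mem_ne_y hxy hz₂) r1 (r1.trans r2'.symm)

/-- `J`-neighbors of `v`, as a filter on `H`-neighbors. -/
def nbrJ (H : SimpleGraph V) [DecidableRel H.Adj] (x y v : V) : Finset V :=
  (H.neighborFinset v).filter fun w => s(v, w) ≠ s(x, y)

variable [DecidableRel H.Adj]

theorem mem_nbrJ {v w : V} :
    w ∈ nbrJ H x y v ↔ (H.deleteEdges {s(x, y)}).Adj v w := by
  simp only [nbrJ, Finset.mem_filter, SimpleGraph.mem_neighborFinset,
    SimpleGraph.deleteEdges_adj, Set.mem_singleton_iff]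

theorem nbrJ_x (hxy : H.Adj x y) : nbrJ H x y x = (H.neighborFinset x).erase y := by
  ext w
  simp only [nbrJ, Finset.mem_filter, Finset.mem_erase, SimpleGraph.mem_neighborFinset]
  constructor
  · rintro ⟨h1, h2⟩
    exact ⟨fun h => h2 (by rw [h]), h1⟩
  · rintro ⟨h1, h2⟩
    refine ⟨h2, fun h => h1 (Sym2.congr_right.1 h)⟩

theorem nbrJ_y (hxy : H.Adj x y) : nbrJ H x y y = (H.neighborFinset y).erase x := by
  ext w
  simp only [nbrJ, Finset.mem_filter, Finset.mem_erase, SimpleGraph.mem_neighborFinset]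
  constructor
  · rintro ⟨h1, h2⟩
    refine ⟨fun h => h2 ?_, h1⟩
    rw [h, Sym2.eq_swap]
  · rintro ⟨h1, h2⟩
    refine ⟨h2, fun h => ?_⟩
    rcases Sym2.eq_iff.1 h with ⟨h3, -⟩ | ⟨-, h4⟩
    · exact hxy.ne (h3.symm)
    · exact h1 h4
theorem nbrJ_other {v : V} (hvx : v ≠ x) (hvy : v ≠ y) :
    nbrJ H x y v = H.neighborFinset v := by
  ext w
  simp only [nbrJ, Finset.mem_filter, SimpleGraph.mem_neighborFinset]
  constructor
  · rintro ⟨h1, -⟩; exact h1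
  · intro h1
    refine ⟨h1, fun h => ?_⟩
    rcases Sym2.eq_iff.1 h with ⟨h3, -⟩ | ⟨h3, -⟩
    · exact hvx h3
    · exact hvy h3

/-- colors present at `v` on `J`-edges. -/
noncomputable def presentF (H : SimpleGraph V) [DecidableRel H.Adj]
    (x y : V) (C : Sym2 V → ℕ) (v : V) : Finset ℕ :=
  (nbrJ H x y v).image fun w => C s(v, w)

theorem range_subset_free_union_present (v : V) :
    Finset.range k ⊆ freeSet (H.deleteEdges {s(x, y)}) k C v ∪ presentF H x y C v := by
  intro c hc
  rw [Finset.mem_union]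
  by_cases hp : c ∈ presentF H x y C v
  · exact Or.inr hp
  · refine Or.inl (mem_freeSet.2 ⟨Finset.mem_range.1 hc, fun w hw hcc => ?_⟩)
    exact hp (Finset.mem_image.2 ⟨w, mem_nbrJ.2 hw, hcc⟩)

theorem k_le_free_add_present (v : V) :
    k ≤ (freeSet (H.deleteEdges {s(x, y)}) k C v).card + (presentF H x y C v).card := by
  calc k = (Finset.range k).card := (Finset.card_range k).symm
    _ ≤ (freeSet (H.deleteEdges {s(x, y)}) k C v ∪ presentF H x y C v).card :=
        Finset.card_le_card (range_subset_free_union_present v)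
    _ ≤ _ := Finset.card_union_le _ _

theorem present_card_le (v : V) : (presentF H x y C v).card ≤ (nbrJ H x y v).card :=
  Finset.card_image_le

end Fan3

/-! ### Vizing's adjacency lemma -/

section VAL

variable {H : SimpleGraph V} [DecidableRel H.Adj] {k : ℕ}

theorem vizing_adjacency (hdeg : ∀ v : V, H.degree v ≤ k)
    (hnc : ¬∃ C' : Sym2 V → ℕ, IsProperEdgeColoring H k C')
    {x y : V} (hxy : H.Adj x y) {C : Sym2 V → ℕ}
    (hC : IsProperEdgeColoring (H.deleteEdges {s(x, y)}) k C) :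
    k + 1 ≤ H.degree x +
      (((H.neighborFinset y).filter fun z => H.degree z = k).erase x).card := by
  classical
  set J := H.deleteEdges {s(x, y)} with hJdef
  -- a free color at y
  have hfree_y : 1 ≤ (freeSet J k C y).card := by
    have h1 := k_le_free_add_present (H := H) (k := k) (x := x) (y := y) (C := C) y
    have h2 := present_card_le (H := H) (x := x) (y := y) (C := C) y
    rw [← hJdef] at h1
    have h3 : (nbrJ H x y y).card + 1 = H.degree y := by
      rw [nbrJ_y hxy, SimpleGraph.degree]
      exact Finset.card_erase_add_one (by
        rw [SimpleGraph.mem_neighborFinset]; exact hxy.symm)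
    have h4 := hdeg y
    omega
  obtain ⟨α, hα⟩ := Finset.card_pos.1 hfree_y
  -- maximal fan
  obtain ⟨L, hL, hmax⟩ := exists_maximal_fan (k := k) hxy C
  set LF : Finset V := L.toFinset with hLF
  have hxLF : x ∈ LF := List.mem_toFinset.2 hL.base_mem
  set Lx : Finset V := LF.erase x with hLx
  set T : Finset ℕ := Lx.image (fun w => C s(y, w)) with hT
  -- each free set of a fan vertex lands in T
  have hsubT : ∀ z ∈ LF, freeSet J k C z ⊆ T := by
    intro z hz β hβ
    obtain ⟨w, hwL, hwadj, hwc⟩ :=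
      fan_closure hnc hxy hC hL hmax (List.mem_toFinset.1 hz) hβ
    have hwx : w ≠ x := by
      intro h
      subst h
      rw [SimpleGraph.deleteEdges_adj] at hwadj
      exact hwadj.2 (by rw [Sym2.eq_swap]; exact rfl)
    exact Finset.mem_image.2 ⟨w, Finset.mem_erase.2 ⟨hwx, List.mem_toFinset.2 hwL⟩, hwc⟩
  -- disjointness
  have hdisj : ∀ z₁ ∈ LF, ∀ z₂ ∈ LF, z₁ ≠ z₂ →
      Disjoint (freeSet J k C z₁) (freeSet J k C z₂) := by
    intro z₁ h₁ z₂ h₂ hne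
    rw [Finset.disjoint_left]
    intro β hβ₁ hβ₂
    exact fan_L2 hnc hxy hC hL hmax hα (List.mem_toFinset.1 h₁)
      (List.mem_toFinset.1 h₂) hne hβ₁ hβ₂
  -- counting
  have hsum : (∑ z ∈ LF, (freeSet J k C z).card) ≤ Lx.card := by
    rw [← Finset.card_biUnion hdisj]
    refine le_trans (Finset.card_le_card (Finset.biUnion_subset.2 hsubT)) ?_
    exact Finset.card_image_le
  -- split the sum
  have hsplit : (freeSet J k C x).card + (∑ z ∈ Lx, (freeSet J k C z).card) =
      ∑ z ∈ LF, (freeSet J k C z).card := by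
    rw [hLx]
    exact Finset.add_sum_erase LF (fun z => (freeSet J k C z).card) hxLF
  -- lower bound at x
  have hx_lb : k + 1 ≤ (freeSet J k C x).card + H.degree x := by
    have h1 := k_le_free_add_present (H := H) (k := k) (x := x) (y := y) (C := C) x
    have h2 := present_card_le (H := H) (x := x) (y := y) (C := C) x
    rw [← hJdef] at h1
    have h3 : (nbrJ H x y x).card + 1 = H.degree x := by
      rw [nbrJ_x hxy, SimpleGraph.degree]
      exact Finset.card_erase_add_one (by
        rw [SimpleGraph.mem_neighborFinset]; exact hxy)
    omega
  -- the partition of Lx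
  set A := Lx.filter (fun z => H.degree z = k) with hA
  set B := Lx.filter (fun z => ¬ H.degree z = k) with hB
  have hAB : A.card + B.card = Lx.card := Finset.card_filter_add_card_filter_not _
  -- each z in B contributes at least 1
  have hB_lb : B.card ≤ ∑ z ∈ B, (freeSet J k C z).card := by
    refine le_trans (le_of_eq (Finset.card_eq_sum_ones B)) (Finset.sum_le_sum ?_)
    intro z hz
    rw [hB, Finset.mem_filter, hLx, Finset.mem_erase] at hz
    obtain ⟨⟨hzx, hzLF⟩, hzdeg⟩ := hz
    have hzy : z ≠ y := hL.mem_ne_y hxy (List.mem_toFinset.1 hzLF)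
    have h1 := k_le_free_add_present (H := H) (k := k) (x := x) (y := y) (C := C) z
    have h2 := present_card_le (H := H) (x := x) (y := y) (C := C) z
    rw [← hJdef] at h1
    have h3 : (nbrJ H x y z).card = H.degree z := by
      rw [nbrJ_other hzx hzy, SimpleGraph.degree]
    have h4 := hdeg z
    omega
  have hB_le : ∑ z ∈ B, (freeSet J k C z).card ≤ ∑ z ∈ Lx, (freeSet J k C z).card :=
    Finset.sum_le_sum_of_subset (Finset.filter_subset _ _)
  -- conclude k + 1 ≤ degree x + A.card
  have hmain : k + 1 ≤ H.degree x + A.card := by omega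
  -- A is contained in the target set
  refine le_trans hmain (Nat.add_le_add_left (Finset.card_le_card ?_) _)
  intro z hz
  rw [hA, Finset.mem_filter, hLx, Finset.mem_erase] at hz
  obtain ⟨⟨hzx, hzLF⟩, hzdeg⟩ := hz
  refine Finset.mem_erase.2 ⟨hzx, Finset.mem_filter.2 ⟨?_, hzdeg⟩⟩
  rw [SimpleGraph.mem_neighborFinset]
  exact hL.mem_adj' hxy (List.mem_toFinset.1 hzLF)

end VAL

/-! ### The critical subgraph machinery -/

section Critical

/-- spanning subgraph with edge set `F`. -/
def gOn (F : Finset (Sym2 V)) : SimpleGraph V := SimpleGraph.fromEdgeSet ↑F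

theorem adj_gOn {F : Finset (Sym2 V)} {a b : V} :
    (gOn F).Adj a b ↔ s(a, b) ∈ F ∧ a ≠ b := by
  rw [gOn, SimpleGraph.fromEdgeSet_adj]; simp

instance gOn_decidable (F : Finset (Sym2 V)) : DecidableRel (gOn F).Adj := fun a b =>
  decidable_of_iff (s(a, b) ∈ F ∧ a ≠ b) adj_gOn.symm

theorem gOn_erase {F : Finset (Sym2 V)} {e : Sym2 V} :
    gOn (F.erase e) = (gOn F).deleteEdges {e} := by
  ext a b
  rw [adj_gOn, SimpleGraph.deleteEdges_adj, adj_gOn, Finset.mem_erase]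
  simp only [Set.mem_singleton_iff]
  tauto

theorem exists_minimal {α : Type*} [DecidableEq α] (P : Finset α → Prop) (F₀ : Finset α)
    (h : P F₀) : ∃ F, F ⊆ F₀ ∧ P F ∧ ∀ F', F' ⊂ F → ¬ P F' := by
  classical
  induction F₀ using Finset.strongInduction with
  | _ F₀ ih =>
    by_cases hex : ∃ F' ⊂ F₀, P F'
    · obtain ⟨F', hsub, hPF'⟩ := hex
      obtain ⟨F, h1, h2, h3⟩ := ih F' hsub hPF'
      exact ⟨F, h1.trans hsub.subset, h2, h3⟩
    · push_neg at hex
      exact ⟨F₀, Finset.Subset.refl _, h, hex⟩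

variable {G : SimpleGraph V} [DecidableRel G.Adj]

theorem gOn_edgeFinset : gOn G.edgeFinset = G := by
  rw [gOn, SimpleGraph.coe_edgeFinset, SimpleGraph.fromEdgeSet_edgeSet]

theorem gOn_adj_sub {F : Finset (Sym2 V)} (hF : F ⊆ G.edgeFinset) {a b : V}
    (h : (gOn F).Adj a b) : G.Adj a b := by
  rw [adj_gOn] at h
  exact (SimpleGraph.mem_edgeSet _).1 (SimpleGraph.mem_edgeFinset.1 (hF h.1))

theorem gOn_nbr_sub {F : Finset (Sym2 V)} (hF : F ⊆ G.edgeFinset) (v : V) :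
    (gOn F).neighborFinset v ⊆ G.neighborFinset v := by
  intro w hw
  rw [SimpleGraph.mem_neighborFinset] at hw ⊢
  exact gOn_adj_sub hF hw

theorem gOn_degree_le {F : Finset (Sym2 V)} (hF : F ⊆ G.edgeFinset) (v : V) :
    (gOn F).degree v ≤ G.degree v :=
  Finset.card_le_card (gOn_nbr_sub hF v)

theorem gOn_empty_colorable (k : ℕ) :
    ∃ C : Sym2 V → ℕ, IsProperEdgeColoring (gOn (∅ : Finset (Sym2 V))) k C := by
  refine ⟨fun _ => 0, ⟨fun e he => ?_, fun e₁ he₁ e₂ he₂ _ _ => ?_⟩⟩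
  · rw [gOn, SimpleGraph.edgeSet_fromEdgeSet] at he
    simp at he
  · rw [gOn, SimpleGraph.edgeSet_fromEdgeSet] at he₁
    simp at he₁

/-- the reachability closure argument. -/
theorem reach_closed {P : V → Prop} (hP : ∀ u w, P u → G.Adj u w → P w) :
    ∀ {u w : V}, G.Reachable u w → P u → P w := by
  intro u w hr
  obtain ⟨q⟩ := hr
  induction q with
  | nil => exact id
  | cons h q ih => exact fun hu => ih (hP _ _ hu h)

end Critical

/-! ### Main argument -/

section Main

variable {G : SimpleGraph V} [DecidableRel G.Adj]

theorem hz_main (hconn : G.Connected)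
    (hGnc : ¬∃ C : Sym2 V → ℕ, IsProperEdgeColoring G G.maxDegree C)
    (hcore : ∀ v : V, G.degree v = G.maxDegree →
      ((G.neighborFinset v).filter (fun w => G.degree w = G.maxDegree)).card ≤ 2) :
    ∀ v : V, 2 ≤ ((G.neighborFinset v).filter
      (fun w => G.degree w = G.maxDegree)).card := by
  classical
  set k := G.maxDegree with hk
  -- a minimal uncolorable edge set
  obtain ⟨F, hFsub, hFnc, hFmin⟩ := exists_minimal
    (fun F => ¬∃ C : Sym2 V → ℕ, IsProperEdgeColoring (gOn F) k C) G.edgeFinset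
    (by show ¬∃ C : Sym2 V → ℕ, IsProperEdgeColoring (gOn G.edgeFinset) k C
        rw [gOn_edgeFinset]; exact hGnc)
  set H : SimpleGraph V := gOn F with hH
  have hdegH : ∀ v : V, H.degree v ≤ k := fun v =>
    le_trans (gOn_degree_le hFsub v) (SimpleGraph.degree_le_maxDegree G v)
  have hcrit : ∀ e ∈ F, ∃ C : Sym2 V → ℕ,
      IsProperEdgeColoring (H.deleteEdges {e}) k C := by
    intro e he
    have h1 := hFmin (F.erase e) (Finset.erase_ssubset he)
    rw [not_not] at h1
    rwa [gOn_erase] at h1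
  -- degrees in G bounded
  have hdegG : ∀ v : V, G.degree v ≤ k := fun v => SimpleGraph.degree_le_maxDegree G v
  -- H-adjacency gives membership in F
  have hadjF : ∀ {a b : V}, H.Adj a b → s(a, b) ∈ F := fun h => (adj_gOn.1 h).1
  -- Step A : every H-covered vertex has ≥ 2 H-neighbors of H-degree k
  have stepA : ∀ y : V, 0 < H.degree y →
      2 ≤ ((H.neighborFinset y).filter (fun z => H.degree z = k)).card := by
    intro y hy
    have hne : (H.neighborFinset y).Nonempty := Finset.card_pos.1 hy
    obtain ⟨x, hxmem, hxmin⟩ := Finset.exists_min_image (H.neighborFinset y) (fun w => H.degree w) hne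
    have hyx : H.Adj y x := (SimpleGraph.mem_neighborFinset _ _ _).1 hxmem
    have hxy : H.Adj x y := hyx.symm
    obtain ⟨C, hC⟩ := hcrit s(x, y) (hadjF hxy)
    have hval := vizing_adjacency hdegH hFnc hxy hC
    by_cases hdx : H.degree x < k
    · have h1 : (((H.neighborFinset y).filter fun z => H.degree z = k).erase x).card ≤
          ((H.neighborFinset y).filter fun z => H.degree z = k).card :=
        Finset.card_erase_le
      omega
    · have hdxk : H.degree x = k := le_antisymm (hdegH x) (not_lt.1 hdx)
      by_cases hdy : 2 ≤ H.degree y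
      · refine le_trans hdy (Finset.card_le_card ?_)
        intro w hw
        rw [Finset.mem_filter]
        refine ⟨hw, le_antisymm (hdegH w) ?_⟩
        calc k = H.degree x := hdxk.symm
          _ ≤ H.degree w := hxmin w hw
      · -- degree y = 1 : contradiction via VAL in the other direction
        exfalso
        have hdy1 : H.degree y = 1 := by omega
        obtain ⟨C', hC'⟩ := hcrit s(y, x) (Sym2.eq_swap ▸ hadjF hxy)
        have hval' := vizing_adjacency hdegH hFnc hyx hC'
        have h2 : (((H.neighborFinset x).filter fun z => H.degree z = k).erase y).card ≤
            ((H.neighborFinset x).erase y).card :=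
          Finset.card_le_card (Finset.erase_subset_erase _ (Finset.filter_subset _ _))
        have h3 : ((H.neighborFinset x).erase y).card + 1 = H.degree x :=
          Finset.card_erase_add_one ((SimpleGraph.mem_neighborFinset _ _ _).2 hxy)
        omega
  -- Step B : every H-covered vertex has H-degree ≥ k - 1
  have stepB : ∀ y : V, 0 < H.degree y → k ≤ H.degree y + 1 := by
    intro y hy
    obtain ⟨u, hu⟩ := Finset.card_pos.1 (lt_of_lt_of_le (by norm_num) (stepA y hy))
    rw [Finset.mem_filter, SimpleGraph.mem_neighborFinset] at hu
    obtain ⟨hyu, hudeg⟩ := hu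
    obtain ⟨C, hC⟩ := hcrit s(y, u) (hadjF hyu)
    have hval := vizing_adjacency hdegH hFnc hyu hC
    -- the target erase-set injects into the G-core neighborhood of u
    have hsub : (((H.neighborFinset u).filter fun z => H.degree z = k).erase y) ⊆
        (G.neighborFinset u).filter (fun w => G.degree w = k) := by
      intro z hz
      rw [Finset.mem_erase, Finset.mem_filter, SimpleGraph.mem_neighborFinset] at hz
      obtain ⟨hzy, hz1, hz2⟩ := hz
      rw [Finset.mem_filter, SimpleGraph.mem_neighborFinset]
      refine ⟨gOn_adj_sub hFsub hz1, le_antisymm (hdegG z) ?_⟩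
      calc k = H.degree z := hz2.symm
        _ ≤ G.degree z := gOn_degree_le hFsub z
    have hudegG : G.degree u = k := le_antisymm (hdegG u) (by
      calc k = H.degree u := hudeg.symm
        _ ≤ G.degree u := gOn_degree_le hFsub u)
    have hcoreu := hcore u hudegG
    have h2 := Finset.card_le_card hsub
    omega
  -- Step 7 : H-covered vertices have full degree
  have step7 : ∀ v : V, 0 < H.degree v → H.degree v = G.degree v := by
    intro v hv
    by_contra hne
    have hlt : H.degree v < G.degree v :=
      lt_of_le_of_ne (Finset.card_le_card (gOn_nbr_sub hFsub v)) hne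
    have hvk : H.degree v + 1 = k := by
      have := stepB v hv
      have := hdegG v
      omega
    have hvG : G.degree v = k := by
      have := hdegG v
      omega
    -- take an H-neighbor u of H-degree k
    obtain ⟨u, hu⟩ := Finset.card_pos.1 (lt_of_lt_of_le (by norm_num) (stepA v hv))
    rw [Finset.mem_filter, SimpleGraph.mem_neighborFinset] at hu
    obtain ⟨hvu, hudeg⟩ := hu
    have hudegG : G.degree u = k := le_antisymm (hdegG u) (by
      calc k = H.degree u := hudeg.symm
        _ ≤ G.degree u := gOn_degree_le hFsub u)
    -- u's G-core neighborhood contains v and ≥ 2 others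
    set S := (G.neighborFinset u).filter (fun w => G.degree w = k) with hS
    have hvS : v ∈ S := by
      rw [hS, Finset.mem_filter, SimpleGraph.mem_neighborFinset]
      exact ⟨(gOn_adj_sub hFsub hvu).symm, hvG⟩
    have hsub2 : ((H.neighborFinset u).filter fun z => H.degree z = k) ⊆ S.erase v := by
      intro z hz
      rw [Finset.mem_filter, SimpleGraph.mem_neighborFinset] at hz
      obtain ⟨hz1, hz2⟩ := hz
      rw [Finset.mem_erase, hS, Finset.mem_filter, SimpleGraph.mem_neighborFinset]
      refine ⟨?_, gOn_adj_sub hFsub hz1, le_antisymm (hdegG z) ?_⟩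
      · intro h
        rw [h] at hz2
        omega
      · calc k = H.degree z := hz2.symm
          _ ≤ G.degree z := gOn_degree_le hFsub z
    have h4 : 2 ≤ (S.erase v).card :=
      le_trans (stepA u (by omega)) (Finset.card_le_card hsub2)
    have h5 : (S.erase v).card + 1 = S.card := Finset.card_erase_add_one hvS
    have h6 := hcore u hudegG
    rw [← hS] at h6
    omega
  -- every vertex is H-covered
  have hcovered : ∀ v : V, 0 < H.degree v := by
    have hFne : F.Nonempty := by
      rw [Finset.nonempty_iff_ne_empty]
      intro h
      apply hFnc
      rw [hH, h]
      exact gOn_empty_colorable k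
    obtain ⟨e, he⟩ := hFne
    have hcov : ∃ a : V, 0 < H.degree a := by
      induction e with
      | _ a b =>
        have hab : a ≠ b := by
          have := (SimpleGraph.mem_edgeSet _).1 (SimpleGraph.mem_edgeFinset.1 (hFsub he))
          exact this.ne
        have hadj : H.Adj a b := adj_gOn.2 ⟨he, hab⟩
        refine ⟨a, Finset.card_pos.2 ⟨b, ?_⟩⟩
        rw [SimpleGraph.mem_neighborFinset]
        exact hadj
    obtain ⟨a, ha⟩ := hcov
    intro v
    refine reach_closed (P := fun w => 0 < H.degree w) ?_ (hconn.preconnected a v) ha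
    intro u w hu huw
    have hdeq : H.degree u = G.degree u := step7 u hu
    have hnbr : H.neighborFinset u = G.neighborFinset u :=
      Finset.eq_of_subset_of_card_le (gOn_nbr_sub hFsub u) (le_of_eq hdeq.symm)
    have hwu : H.Adj u w := by
      rw [← SimpleGraph.mem_neighborFinset, hnbr, SimpleGraph.mem_neighborFinset]
      exact huw
    refine Finset.card_pos.2 ⟨u, ?_⟩
    rw [SimpleGraph.mem_neighborFinset]
    exact hwu.symm
  -- conclusion
  intro v
  refine le_trans (stepA v (hcovered v)) (Finset.card_le_card ?_)
  intro z hz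
  rw [Finset.mem_filter, SimpleGraph.mem_neighborFinset] at hz
  obtain ⟨hz1, hz2⟩ := hz
  rw [Finset.mem_filter, SimpleGraph.mem_neighborFinset]
  refine ⟨gOn_adj_sub hFsub hz1, le_antisymm (hdegG z) ?_⟩
  calc k = H.degree z := hz2.symm
    _ ≤ G.degree z := gOn_degree_le hFsub z

end Main
end HZ

/-- The chromatic index of `G`. -/
noncomputable def chromaticIndex {V : Type*} (G : SimpleGraph V) : ℕ :=
  sInf {k | ∃ C, IsProperEdgeColoring G k C}

/-- If `G` is an HZ-graph with maximum degree `Δ`, then every vertex of `G` has at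
least two neighbors of degree `Δ`. -/
theorem hz_two_delta_neighbors {V : Type*} [Fintype V] [DecidableEq V]
    (G : SimpleGraph V) [DecidableRel G.Adj]
    (hconn : G.Connected)
    (hclass2 : chromaticIndex G = G.maxDegree + 1)
    (hcore : ∀ v : V, G.degree v = G.maxDegree →
      ((G.neighborFinset v).filter (fun w => G.degree w = G.maxDegree)).card ≤ 2) :
    ∀ v : V, 2 ≤ ((G.neighborFinset v).filter (fun w => G.degree w = G.maxDegree)).card := by
  refine HZ.hz_main hconn ?_ hcore
  rintro ⟨C, hC⟩
  have h1 : chromaticIndex G ≤ G.maxDegree := Nat.sInf_le ⟨C, hC⟩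
  omega
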